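/- arXiv:2007.00836 — 2 statements merged into one kernel-verified Lean document; each statement's English description precedes it below -/
import Mathlib

section
/- The derivative with respect to ρ at ρ = 0 of the Copas per-study log-likelihood ℓ(ρ) = -½ log(τ²+σ²) - (y-μ)²/(2(τ²+σ²)) - log Φ(γ0+γ1/s) + log Φ(v(y;ρ)) equals φ(γ0+γ1/s)/Φ(γ0+γ1/s) · s(y-μ)/(τ²+σ²), where φ is the standard normal density. -/
open MeasureTheory ProbabilityTheory

/-- Standard normal CDF. -/
noncomputable def stdNormCDF (x : ℝ) : ℝ := (gaussianReal 0 1 (Set.Iic x)).toReal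

/-- Standard normal density. -/
noncomputable def stdNormPDF (x : ℝ) : ℝ := gaussianPDFReal 0 1 x

/-! At `ρ = 0` the square root in `v(y;ρ)` has value `1` and derivative `0` (its radicand is
`1 - O(ρ²)`), so `v` has value `γ₀ + γ₁/s` and slope `s(y-μ)/(τ²+σ²)` there. The only
`ρ`-dependent term of `ℓ` is `log Φ(v(y;ρ))`, whose derivative follows by the chain rule from
`Φ' = φ`. -/

theorem hasDerivAt_integral_Iic {E : Type*} [NormedAddCommGroup E] [NormedSpace ℝ E]
    [CompleteSpace E] {f : ℝ → E} (hf : Integrable f) (hcont : Continuous f) (x : ℝ) :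
    HasDerivAt (fun z => ∫ t in Set.Iic z, f t) (f x) x := by
  have hsplit : ∀ z, ∫ t in Set.Iic z, f t = (∫ t in Set.Iic 0, f t) + ∫ t in (0 : ℝ)..z, f t :=
    fun z => by
      rw [← intervalIntegral.integral_Iic_sub_Iic hf.integrableOn hf.integrableOn,
        add_sub_cancel]
  refine HasDerivAt.congr_of_eventuallyEq ?_ (Filter.Eventually.of_forall hsplit)
  exact (intervalIntegral.integral_hasDerivAt_right hf.intervalIntegrable
    hcont.stronglyMeasurable.stronglyMeasurableAtFilter hcont.continuousAt).const_add _

theorem stdNormCDF_eq_integral (x : ℝ) :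
    stdNormCDF x = ∫ t in Set.Iic x, gaussianPDFReal 0 1 t := by
  rw [stdNormCDF, gaussianReal_apply_eq_integral 0 one_ne_zero,
    ENNReal.toReal_ofReal (integral_nonneg fun t => gaussianPDFReal_nonneg 0 1 t)]

theorem hasDerivAt_stdNormCDF (x : ℝ) : HasDerivAt stdNormCDF (stdNormPDF x) x := by
  have hcont : Continuous (gaussianPDFReal 0 1) := by
    unfold gaussianPDFReal
    fun_prop
  rw [show stdNormCDF = _ from funext stdNormCDF_eq_integral]
  exact hasDerivAt_integral_Iic (integrable_gaussianPDFReal 0 1) hcont x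

theorem HasDerivAt.log_stdNormCDF {f : ℝ → ℝ} {f' x : ℝ} (hf : HasDerivAt f f' x)
    (hΦ : stdNormCDF (f x) ≠ 0) :
    HasDerivAt (fun t => Real.log (stdNormCDF (f t)))
      (stdNormPDF (f x) / stdNormCDF (f x) * f') x := by
  have h := ((hasDerivAt_stdNormCDF (f x)).comp x hf).log hΦ
  simp only [Function.comp_apply] at h
  convert h using 1
  ring

theorem hasDerivAt_add_mul_div_sqrt_one_sub_sq_mul_at_zero (a b c : ℝ) :
    HasDerivAt (fun ρ : ℝ => (a + ρ * b) / Real.sqrt (1 - ρ ^ 2 * c)) b 0 := by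
  have hnum : HasDerivAt (fun ρ : ℝ => a + ρ * b) b 0 := by
    simpa using ((hasDerivAt_id (0 : ℝ)).mul_const b).const_add a
  have hden : HasDerivAt (fun ρ : ℝ => Real.sqrt (1 - ρ ^ 2 * c)) 0 0 := by
    simpa using (((hasDerivAt_pow 2 (0 : ℝ)).mul_const c).const_sub 1).sqrt (by simp)
  simpa [Pi.div_def] using hnum.div hden (by simp)

theorem copas_score_at_null_general
    (γ0 γ1 s τ σ μ y : ℝ)
    (hΦ : 0 < stdNormCDF (γ0 + γ1 / s))
    (v : ℝ → ℝ → ℝ)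
    (hv : v = fun y ρ => (γ0 + γ1 / s + ρ * s * (y - μ) / (τ ^ 2 + σ ^ 2)) /
      Real.sqrt (1 - ρ ^ 2 * s ^ 2 / (τ ^ 2 + σ ^ 2)))
    (ℓ : ℝ → ℝ)
    (hℓ : ℓ = fun ρ => -(1 / 2) * Real.log (τ ^ 2 + σ ^ 2)
      - (y - μ) ^ 2 / (2 * (τ ^ 2 + σ ^ 2))
      - Real.log (stdNormCDF (γ0 + γ1 / s)) + Real.log (stdNormCDF (v y ρ))) :
    HasDerivAt ℓ
      (stdNormPDF (γ0 + γ1 / s) / stdNormCDF (γ0 + γ1 / s)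
        * (s * (y - μ) / (τ ^ 2 + σ ^ 2))) 0 := by
  have hv_eq : v y = fun ρ => (γ0 + γ1 / s + ρ * (s * (y - μ) / (τ ^ 2 + σ ^ 2))) /
      Real.sqrt (1 - ρ ^ 2 * (s ^ 2 / (τ ^ 2 + σ ^ 2))) := by
    subst hv
    funext ρ
    ring_nf
  have hv_zero : v y 0 = γ0 + γ1 / s := by simp [hv_eq]
  have hv_deriv : HasDerivAt (v y) (s * (y - μ) / (τ ^ 2 + σ ^ 2)) 0 := by
    rw [hv_eq]
    exact hasDerivAt_add_mul_div_sqrt_one_sub_sq_mul_at_zero _ _ _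
  have hlog := hv_deriv.log_stdNormCDF (by rw [hv_zero]; exact hΦ.ne')
  rw [hv_zero] at hlog
  subst hℓ
  exact hlog.const_add _

/-- The derivative at `ρ = 0` of the Copas per-study log-likelihood
`ℓ(ρ) = -½ log(τ²+σ²) - (y-μ)²/(2(τ²+σ²)) - log Φ(γ₀+γ₁/s) + log Φ(v(y;ρ))`
equals `φ(γ₀+γ₁/s)/Φ(γ₀+γ₁/s) · s (y-μ)/(τ²+σ²)`: the per-study score. -/
theorem copas_score_at_null
    (γ0 γ1 s τ σ μ y : ℝ) (hs : 0 < s) (hvar : 0 < τ ^ 2 + σ ^ 2)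
    (hΦ : 0 < stdNormCDF (γ0 + γ1 / s))
    (v : ℝ → ℝ → ℝ)
    (hv : v = fun y ρ => (γ0 + γ1 / s + ρ * s * (y - μ) / (τ ^ 2 + σ ^ 2)) /
      Real.sqrt (1 - ρ ^ 2 * s ^ 2 / (τ ^ 2 + σ ^ 2)))
    (ℓ : ℝ → ℝ)
    (hℓ : ℓ = fun ρ => -(1 / 2) * Real.log (τ ^ 2 + σ ^ 2)
      - (y - μ) ^ 2 / (2 * (τ ^ 2 + σ ^ 2))
      - Real.log (stdNormCDF (γ0 + γ1 / s)) + Real.log (stdNormCDF (v y ρ))) :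
    HasDerivAt ℓ
      (stdNormPDF (γ0 + γ1 / s) / stdNormCDF (γ0 + γ1 / s)
        * (s * (y - μ) / (τ ^ 2 + σ ^ 2))) 0 :=
  copas_score_at_null_general γ0 γ1 s τ σ μ y hΦ v hv ℓ hℓ
end

section
/- Under the null ρ = 0, the Fisher information matrix of the Copas model with respect to the full parameter (μ, τ², ρ, γ0, γ1) is singular: the rows corresponding to γ0 and γ1 are zero, since the observed-data log-likelihood at ρ = 0 does not depend on (γ0, γ1). -/
open MeasureTheory ProbabilityTheory

/-- Copas per-study observed-data log-likelihood with
`v = (γ₀+γ₁/s+ρ s (y-μ)/(τ²+σ²)) / √(1 - ρ² s²/(τ²+σ²))`. -/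
noncomputable def copasLogLik (μ τ σ s y : ℝ) (ρ γ0 γ1 : ℝ) : ℝ :=
  -(1 / 2) * Real.log (τ ^ 2 + σ ^ 2) - (y - μ) ^ 2 / (2 * (τ ^ 2 + σ ^ 2))
    - Real.log (stdNormCDF (γ0 + γ1 / s))
    + Real.log (stdNormCDF ((γ0 + γ1 / s + ρ * s * (y - μ) / (τ ^ 2 + σ ^ 2)) /
        Real.sqrt (1 - ρ ^ 2 * s ^ 2 / (τ ^ 2 + σ ^ 2))))

lemma copasLogLik_null (μ τ σ s y γ0 γ1 : ℝ) :
    copasLogLik μ τ σ s y 0 γ0 γ1 =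
      -(1 / 2) * Real.log (τ ^ 2 + σ ^ 2) - (y - μ) ^ 2 / (2 * (τ ^ 2 + σ ^ 2)) := by
  unfold copasLogLik
  simp [Real.sqrt_one]

/-- Under the null `ρ = 0` the Copas observed-data log-likelihood does not depend on
`(γ₀, γ₁)`: its partial derivatives in `γ₀` and `γ₁` vanish identically, so the rows of
the Fisher information matrix of the full parameter `(μ, τ², ρ, γ₀, γ₁)` corresponding
to `γ₀` and `γ₁` are zero and the matrix is singular. -/
theorem copas_loglik_free_of_gamma_at_null
    (μ τ σ s y : ℝ) (hs : 0 < s) (hvar : 0 < τ ^ 2 + σ ^ 2) :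
    (∀ γ0 γ1 γ0' γ1' : ℝ,
      copasLogLik μ τ σ s y 0 γ0 γ1 = copasLogLik μ τ σ s y 0 γ0' γ1')
    ∧ (∀ γ0 γ1 : ℝ, HasDerivAt (fun x => copasLogLik μ τ σ s y 0 x γ1) 0 γ0)
    ∧ (∀ γ0 γ1 : ℝ, HasDerivAt (fun x => copasLogLik μ τ σ s y 0 γ0 x) 0 γ1) := by
  refine ⟨fun γ0 γ1 γ0' γ1' => by rw [copasLogLik_null, copasLogLik_null],
    fun γ0 γ1 => ?_, fun γ0 γ1 => ?_⟩ <;>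
  · simp only [copasLogLik_null]
    exact hasDerivAt_const _ _
end
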